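/- arXiv:1804.00279 — 7 statements merged into one kernel-verified Lean document; each statement's English description precedes it below -/
import Mathlib

section
/- Let P ⊴ G be a normal subgroup with N ≤ P, and let D₀, D₁ ⊆ G each be a union of left cosets of P. Then ⋃{R_a : a ∈ G⧸N, ⟨a⟩ ⊆ D₀} = ⋃{R_a : a ∈ G⧸N, ⟨a⟩ ⊆ D₁} if and only if D₀ = D₁. In particular, distinct sets of the atomic relations R_a have distinct unions. -/
/-! `(g, h) ∈ R_a` pins down the label `a = [g]⁻¹ · φ⁻¹[h]`, so a union of atoms determines
its set of labels. A union `D` of cosets of `P ⊇ N` is also a union of cosets of `N`, hence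
equal to the union of the cosets `⟨a⟩ ⊆ D`, so `D` is determined by that set of labels too. -/

open scoped Pointwise

namespace CosetRA

variable {G G' : Type*}

/-- The coset of `a : G ⧸ N` as a subset of `G`: `⟨a⟩ = {g : G | [g]_N = a}`. -/
def cosetOf [Group G] (N : Subgroup G) (a : G ⧸ N) : Set G :=
  {g : G | (g : G ⧸ N) = a}

/-- Forward image `φ[S]` of a subset `S ⊆ G` under a quotient isomorphism. -/
def fwd [Group G] [Group G'] (N : Subgroup G) (M : Subgroup G')
    [N.Normal] [M.Normal] (φ : G ⧸ N ≃* G' ⧸ M) (S : Set G) : Set G' :=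
  {h : G' | ∃ g ∈ S, φ (g : G ⧸ N) = (h : G' ⧸ M)}

/-- Inverse image `φ⁻¹[S']` of a subset `S' ⊆ G'` under a quotient isomorphism. -/
def bwd [Group G] [Group G'] (N : Subgroup G) (M : Subgroup G')
    [N.Normal] [M.Normal] (φ : G ⧸ N ≃* G' ⧸ M) (S' : Set G') : Set G :=
  {g : G | ∃ h ∈ S', φ (g : G ⧸ N) = (h : G' ⧸ M)}

/-- The atomic relation `R_a = {(g,h) : [h]_M = φ([g]_N)·φ(a)}`. -/
def atom [Group G] [Group G'] (N : Subgroup G) (M : Subgroup G')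
    [N.Normal] [M.Normal] (φ : G ⧸ N ≃* G' ⧸ M) (a : G ⧸ N) : Set (G × G') :=
  {p : G × G' | (p.2 : G' ⧸ M) = φ (p.1 : G ⧸ N) * φ a}

/-- Converse of a relation: `R˘ = {(v,u) : (u,v) ∈ R}`. -/
def conv {α β : Type*} (R : Set (α × β)) : Set (β × α) := {p | (p.2, p.1) ∈ R}

/-- Relational composition `R ∘ S`. -/
def rcomp {α β γ : Type*} (R : Set (α × β)) (S : Set (β × γ)) : Set (α × γ) :=
  {p | ∃ v, (p.1, v) ∈ R ∧ (v, p.2) ∈ S}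

/-- `C` is a left coset of the set `P`. -/
def IsLeftCosetSet [Group G] (P C : Set G) : Prop := ∃ g : G, C = g • P

/-- `Q` is a union of left cosets of the set `P`. -/
def IsUnionOfCosets [Group G] (P Q : Set G) : Prop := ∀ g ∈ Q, g • P ⊆ Q

/-- The union of all atomic relations `R_c` with `⟨c⟩ ⊆ K`. -/
def unionAtoms [Group G] [Group G'] (N : Subgroup G) (M : Subgroup G')
    [N.Normal] [M.Normal] (φ : G ⧸ N ≃* G' ⧸ M) (K : Set G) : Set (G × G') :=
  ⋃ c ∈ {c : G ⧸ N | cosetOf N c ⊆ K}, atom N M φ c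

theorem IsUnionOfCosets.mono [Group G] {P Q D : Set G} (hPQ : P ⊆ Q)
    (hD : IsUnionOfCosets Q D) : IsUnionOfCosets P D :=
  fun g hg => (Set.smul_set_mono hPQ).trans (hD g hg)

theorem cosetOf_mk_subset_iff [Group G] {N : Subgroup G} {D : Set G}
    (hD : IsUnionOfCosets (N : Set G) D) (g : G) : cosetOf N (g : G ⧸ N) ⊆ D ↔ g ∈ D := by
  refine ⟨fun h => h rfl, fun hg x hx => hD g hg ?_⟩
  exact mem_leftCoset_iff g |>.mpr (QuotientGroup.eq.mp hx.symm)

theorem IsUnionOfCosets.eq_preimage_mk [Group G] {N : Subgroup G} {D : Set G}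
    (hD : IsUnionOfCosets (N : Set G) D) :
    D = QuotientGroup.mk ⁻¹' {a : G ⧸ N | cosetOf N a ⊆ D} :=
  Set.ext fun g => (cosetOf_mk_subset_iff hD g).symm

section Atoms

variable [Group G] [Group G'] {N : Subgroup G} {M : Subgroup G'} [N.Normal] [M.Normal]
  (φ : G ⧸ N ≃* G' ⧸ M)

theorem mem_atom_iff {a : G ⧸ N} {p : G × G'} :
    p ∈ atom N M φ a ↔ a = (p.1 : G ⧸ N)⁻¹ * φ.symm p.2 := by
  rw [eq_inv_mul_iff_mul_eq, MulEquiv.eq_symm_apply, map_mul, eq_comm]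
  rfl

theorem mem_biUnion_atom_iff {S : Set (G ⧸ N)} {p : G × G'} :
    p ∈ ⋃ a ∈ S, atom N M φ a ↔ (p.1 : G ⧸ N)⁻¹ * φ.symm p.2 ∈ S := by
  simp only [Set.mem_iUnion₂, mem_atom_iff, exists_prop, exists_eq_right]

theorem biUnion_atom_injective :
    Function.Injective fun S : Set (G ⧸ N) => ⋃ a ∈ S, atom N M φ a := by
  intro S T h
  ext a
  obtain ⟨h', hh'⟩ := QuotientGroup.mk_surjective (φ a)
  have key : ∀ U : Set (G ⧸ N), ((1 : G), h') ∈ ⋃ a ∈ U, atom N M φ a ↔ a ∈ U := by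
    intro U
    simp only [mem_biUnion_atom_iff, hh', QuotientGroup.mk_one, inv_one, one_mul,
      MulEquiv.symm_apply_apply]
  rw [← key S, ← key T]
  exact Set.ext_iff.mp h _

theorem unionAtoms_inj {D₀ D₁ : Set G} (h₀ : IsUnionOfCosets (N : Set G) D₀)
    (h₁ : IsUnionOfCosets (N : Set G) D₁) :
    unionAtoms N M φ D₀ = unionAtoms N M φ D₁ ↔ D₀ = D₁ := by
  refine ⟨fun h => ?_, congrArg _⟩
  rw [h₀.eq_preimage_mk, h₁.eq_preimage_mk, biUnion_atom_injective φ h]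

end Atoms

theorem distinct_unions_of_atoms_general {G G' : Type*} [Group G] [Group G']
    (N : Subgroup G) (M : Subgroup G') [N.Normal] [M.Normal]
    (φ : G ⧸ N ≃* G' ⧸ M)
    (P : Subgroup G) (hNP : N ≤ P) (D₀ D₁ : Set G)
    (h₀ : IsUnionOfCosets (P : Set G) D₀) (h₁ : IsUnionOfCosets (P : Set G) D₁) :
    (⋃ a ∈ {a : G ⧸ N | cosetOf N a ⊆ D₀}, atom N M φ a) =
      (⋃ a ∈ {a : G ⧸ N | cosetOf N a ⊆ D₁}, atom N M φ a) ↔ D₀ = D₁ :=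
  unionAtoms_inj φ (h₀.mono hNP) (h₁.mono hNP)

/-- Distinct unions of cosets of a normal subgroup `P ⊇ N` determine distinct
unions of the corresponding atomic relations. -/
theorem distinct_unions_of_atoms {G G' : Type*} [Group G] [Group G']
    (N : Subgroup G) (M : Subgroup G') [N.Normal] [M.Normal]
    (φ : G ⧸ N ≃* G' ⧸ M)
    (P : Subgroup G) [P.Normal] (hNP : N ≤ P) (D₀ D₁ : Set G)
    (h₀ : IsUnionOfCosets (P : Set G) D₀) (h₁ : IsUnionOfCosets (P : Set G) D₁) :
    (⋃ a ∈ {a : G ⧸ N | cosetOf N a ⊆ D₀}, atom N M φ a) =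
      (⋃ a ∈ {a : G ⧸ N | cosetOf N a ⊆ D₁}, atom N M φ a) ↔ D₀ = D₁ :=
  distinct_unions_of_atoms_general N M φ P hNP D₀ D₁ h₀ h₁

end CosetRA
end

section
/- The following are equivalent: (i) the identity relation {(g,g) : g ∈ G} equals ⋃_{a∈S} R_a for some set S ⊆ G⧸N; (ii) R_1 equals the identity relation on G, where 1 is the identity element of G⧸N; (iii) N and M are both the trivial subgroup and φ([g]_N) = [g]_M for every g ∈ G (i.e. φ is the identity automorphism of G modulo the trivial subgroup). (Identity Theorem.) -/
/-! Every atom `R_a` contains a pair `(1, h)` with `[h]_M = φ a`, so an atom inside the diagonal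
is `R_1`, and a union of atoms equal to the diagonal is `R_1` alone. The relation `R_1` is the
graph `φ [g]_N = [h]_M`; it is the diagonal exactly when the pairs `(n, 1)`, `(1, m)` with
`n ∈ N`, `m ∈ M` force `N = M = ⊥`, and `φ` is then the identity on `G`. -/

open scoped Pointwise

namespace CosetRA

variable {G G' : Type*}

section Atoms

variable [Group G] [Group G'] {N : Subgroup G} {M : Subgroup G'} [N.Normal] [M.Normal]
  {φ : G ⧸ N ≃* G' ⧸ M}

theorem mem_atom_one {g : G} {h : G'} : (g, h) ∈ atom N M φ 1 ↔ φ g = h := by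
  rw [atom, Set.mem_ofPred_eq, map_one, mul_one, eq_comm]

theorem mk_one_mem_atom {a : G ⧸ N} {h : G'} (hh : (h : G' ⧸ M) = φ a) :
    ((1 : G), h) ∈ atom N M φ a := by
  rw [atom, Set.mem_ofPred_eq, hh, QuotientGroup.mk_one, map_one, one_mul]

end Atoms

section Diagonal

variable [Group G] {N M : Subgroup G} [N.Normal] [M.Normal] {φ : G ⧸ N ≃* G ⧸ M}

theorem eq_one_of_atom_subset_diagonal {a : G ⧸ N} (ha : atom N M φ a ⊆ Set.diagonal G) :
    a = 1 := by
  obtain ⟨h, hh⟩ := QuotientGroup.mk_surjective (φ a)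
  have one_eq_h : 1 = h := ha (mk_one_mem_atom hh)
  rw [← one_eq_h, QuotientGroup.mk_one, eq_comm, map_eq_one_iff φ φ.injective] at hh
  exact hh

theorem eq_singleton_one_of_diagonal_eq_biUnion_atom {S : Set (G ⧸ N)}
    (hS : Set.diagonal G = ⋃ a ∈ S, atom N M φ a) : S = {1} := by
  have hS_nonempty : S.Nonempty := by
    have hmem : ((1 : G), (1 : G)) ∈ ⋃ a ∈ S, atom N M φ a := hS ▸ Set.mem_diagonal 1
    obtain ⟨a, ha, -⟩ := Set.mem_iUnion₂.mp hmem
    exact ⟨a, ha⟩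
  refine hS_nonempty.subset_singleton_iff.mp fun a ha => ?_
  exact eq_one_of_atom_subset_diagonal (hS ▸ Set.subset_biUnion_of_mem ha)

theorem atom_one_eq_diagonal_iff :
    atom N M φ 1 = Set.diagonal G ↔ N = ⊥ ∧ M = ⊥ ∧ ∀ g : G, φ g = g := by
  simp only [Set.ext_iff, Prod.forall, mem_atom_one, Set.mem_diagonal_iff]
  constructor
  · intro hφ
    refine ⟨?_, ?_, fun g => (hφ g g).2 rfl⟩
    · refine (Subgroup.eq_bot_iff_forall N).2 fun n hn => (hφ n 1).1 ?_
      rw [(QuotientGroup.eq_one_iff n).2 hn, map_one, QuotientGroup.mk_one]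
    · refine (Subgroup.eq_bot_iff_forall M).2 fun m hm => ((hφ 1 m).1 ?_).symm
      rw [QuotientGroup.mk_one, map_one, eq_comm, QuotientGroup.eq_one_iff]
      exact hm
  · rintro ⟨-, rfl, hφ⟩ g h
    rw [hφ, QuotientGroup.eq, Subgroup.mem_bot, inv_mul_eq_one]

end Diagonal

/-- **Identity Theorem.** The identity relation is a union of atoms iff `R_1` is
the identity relation, iff `N` and `M` are trivial and `φ` is the identity. -/
theorem identity_theorem {G : Type*} [Group G]
    (N M : Subgroup G) [N.Normal] [M.Normal] (φ : G ⧸ N ≃* G ⧸ M) :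
    ((∃ S : Set (G ⧸ N), {p : G × G | p.1 = p.2} = ⋃ a ∈ S, atom N M φ a) ↔
      atom N M φ 1 = {p : G × G | p.1 = p.2}) ∧
    (atom N M φ 1 = {p : G × G | p.1 = p.2} ↔
      (N = ⊥ ∧ M = ⊥ ∧ ∀ g : G, φ (g : G ⧸ N) = (g : G ⧸ M))) := by
  refine ⟨⟨?_, fun h => ⟨{1}, by rw [Set.biUnion_singleton, h]⟩⟩, atom_one_eq_diagonal_iff⟩
  rintro ⟨S, hS⟩
  obtain rfl := eq_singleton_one_of_diagonal_eq_biUnion_atom hS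
  rw [hS, Set.biUnion_singleton]

end CosetRA
end

section
/- The following are equivalent: (i) there exist a ∈ G⧸N and b ∈ G′⧸M with (R_a)˘ = S_b; (ii) for every a ∈ G⧸N there exists b ∈ G′⧸M with (R_a)˘ = S_b; (iii) ψ = φ⁻¹, that is, ψ(u) = φ⁻¹(u) for every u ∈ G′⧸M. Moreover, when these conditions hold, the element b in (ii) is uniquely determined by a, namely b = φ(a⁻¹). (Converse Theorem.) -/
open scoped Pointwise

namespace CosetRA

variable {G G' : Type*}

lemma forall_eq_apply_iff_eq_apply_iff_leftInverse {α β : Type*} (f : α ≃ β) (g : β → α) :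
    (∀ u v, v = f u ↔ u = g v) ↔ Function.LeftInverse g f := by
  refine ⟨fun h u => ((h u (f u)).1 rfl).symm, fun hg u v => ⟨?_, ?_⟩⟩
  · rintro rfl
    exact (hg u).symm
  · rintro rfl
    exact (hg.rightInverse_of_surjective f.surjective v).symm

lemma forall_map_mul_eq_self_iff {H : Type*} [Group H] (θ : H →* H) (c : H) :
    (∀ u, θ u * c = u) ↔ c = 1 ∧ ∀ u, θ u = u := by
  refine ⟨fun h => ?_, fun ⟨hc, hθ⟩ u => by rw [hc, mul_one, hθ]⟩
  have hc : c = 1 := by simpa using h 1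
  exact ⟨hc, fun u => by simpa [hc] using h u⟩

section

variable {G G' : Type*} [Group G] [Group G'] {N : Subgroup G} {M : Subgroup G'}
  [N.Normal] [M.Normal] {φ : G ⧸ N ≃* G' ⧸ M} {ψ : G' ⧸ M ≃* G ⧸ N} {a : G ⧸ N} {b : G' ⧸ M}

/-- `R_a` is the graph of the bijection `u ↦ φ u * φ a` and `S_b` that of `v ↦ ψ v * ψ b`, so
`R_a˘ = S_b` says that the second map inverts the first. -/
lemma conv_atom_eq_atom_iff_leftInverse :
    conv (atom N M φ a) = atom M N ψ b ↔ ∀ u, ψ (φ u * φ a) * ψ b = u := by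
  have hgraphs : conv (atom N M φ a) = atom M N ψ b ↔
      ∀ (u : G ⧸ N) (v : G' ⧸ M), v = φ u * φ a ↔ u = ψ v * ψ b := by
    refine ⟨fun h u v => ?_, fun h => Set.ext fun p => h p.2 p.1⟩
    obtain ⟨g, rfl⟩ := QuotientGroup.mk_surjective u
    obtain ⟨g', rfl⟩ := QuotientGroup.mk_surjective v
    exact Set.ext_iff.1 h (g', g)
  rw [hgraphs]
  exact forall_eq_apply_iff_eq_apply_iff_leftInverse (φ.toEquiv.trans (Equiv.mulRight (φ a)))
    (fun v => ψ v * ψ b)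

lemma conv_atom_eq_atom_iff :
    conv (atom N M φ a) = atom M N ψ b ↔ (∀ v, ψ v = φ.symm v) ∧ b = φ a⁻¹ := by
  have hsplit : ∀ u, ψ (φ u * φ a) * ψ b = (φ.trans ψ).toMonoidHom u * ψ (φ a * b) := by
    simp [mul_assoc]
  simp only [conv_atom_eq_atom_iff_leftInverse, hsplit]
  rw [forall_map_mul_eq_self_iff, and_comm, MulEquiv.map_eq_one_iff, mul_eq_one_iff_eq_inv',
    map_inv, φ.surjective.forall]
  simp

end

/-- **Converse Theorem.** Some converse of an atom is an atom of the reversed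
system iff every one is, iff `ψ = φ⁻¹`; and then `b` is uniquely `φ(a⁻¹)`. -/
theorem converse_theorem {G G' : Type*} [Group G] [Group G']
    (N : Subgroup G) (M : Subgroup G') [N.Normal] [M.Normal]
    (φ : G ⧸ N ≃* G' ⧸ M) (ψ : G' ⧸ M ≃* G ⧸ N) :
    (((∃ a : G ⧸ N, ∃ b : G' ⧸ M, conv (atom N M φ a) = atom M N ψ b) ↔
        (∀ a : G ⧸ N, ∃ b : G' ⧸ M, conv (atom N M φ a) = atom M N ψ b)) ∧
      ((∀ a : G ⧸ N, ∃ b : G' ⧸ M, conv (atom N M φ a) = atom M N ψ b) ↔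
        (∀ u : G' ⧸ M, ψ u = φ.symm u))) ∧
    ((∀ u : G' ⧸ M, ψ u = φ.symm u) →
      ∀ (a : G ⧸ N) (b : G' ⧸ M), conv (atom N M φ a) = atom M N ψ b → b = φ a⁻¹) := by
  simp only [conv_atom_eq_atom_iff]
  have hall : (∀ u : G' ⧸ M, ψ u = φ.symm u) →
      ∀ a : G ⧸ N, ∃ b, (∀ u, ψ u = φ.symm u) ∧ b = φ a⁻¹ :=
    fun hψ a => ⟨φ a⁻¹, hψ, rfl⟩
  exact ⟨⟨⟨fun ⟨_, _, hψ, _⟩ => hall hψ, fun h => ⟨1, h 1⟩⟩,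
    ⟨fun h => (h 1).elim fun _ hb => hb.1, hall⟩⟩, fun _ _ _ h => h.2⟩

end CosetRA
end

section
/- Let C ⊆ G be a left coset of N, and for a ∈ G⧸N define P_C(a) := ⋃{R_γ : γ ∈ G⧸N, ⟨γ⟩ ⊆ ⟨a⟩·C} (this is the coset-shifted relative product of R_a with the identity relation on G′). The following are equivalent: (i) P_C(a) = R_a for some a ∈ G⧸N; (ii) P_C(a) = R_a for every a ∈ G⧸N; (iii) C = N as subsets of G. (Identity Law Theorem: the shifted relative product with the identity relation is the identity operation exactly when the shifting coset is the identity coset.) -/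
/-!
Writing `C = ⟨c⟩`, normality gives `⟨a⟩·⟨c⟩ = ⟨a c⟩`, and the only coset contained in a coset is
itself, so `P_C(a) = R_{a c}`. Since `a ↦ R_a` is injective, each of the three conditions
says `c = 1`.
-/

open scoped Pointwise

namespace CosetRA

variable {G G' : Type*}

section

variable [Group G] (N : Subgroup G)

theorem cosetOf_mk (g : G) : cosetOf N (g : G ⧸ N) = g • (N : Set G) :=
  QuotientGroup.eq_class_eq_leftCoset N g

theorem cosetOf_one [N.Normal] : cosetOf N 1 = N := by
  simpa using cosetOf_mk N 1

theorem out_mem_cosetOf (a : G ⧸ N) : a.out ∈ cosetOf N a :=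
  QuotientGroup.out_eq' a

theorem cosetOf_subset_cosetOf_iff {a b : G ⧸ N} : cosetOf N a ⊆ cosetOf N b ↔ a = b := by
  refine ⟨fun h => ?_, fun h => h ▸ subset_rfl⟩
  simpa [cosetOf] using h (out_mem_cosetOf N a)

theorem cosetOf_injective : Function.Injective (cosetOf N) := fun _ _ h =>
  (cosetOf_subset_cosetOf_iff N).mp h.subset

theorem cosetOf_mul [N.Normal] (a b : G ⧸ N) :
    cosetOf N a * cosetOf N b = cosetOf N (a * b) := by
  ext x
  constructor
  · rintro ⟨s, hs, t, ht, rfl⟩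
    simp_all [cosetOf]
  · intro hx
    refine ⟨x * b.out⁻¹, ?_, b.out, out_mem_cosetOf N b, inv_mul_cancel_right x b.out⟩
    simp_all [cosetOf]

end

section

variable [Group G] [Group G'] (N : Subgroup G) (M : Subgroup G') [N.Normal] [M.Normal]
  (φ : G ⧸ N ≃* G' ⧸ M)

theorem unionAtoms_cosetOf (a : G ⧸ N) : unionAtoms N M φ (cosetOf N a) = atom N M φ a := by
  simp [unionAtoms, cosetOf_subset_cosetOf_iff]

theorem atom_injective : Function.Injective (atom N M φ) := by
  intro a b h
  have hmem : ((1 : G), (φ a).out) ∈ atom N M φ a := by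
    simp [atom]
  rw [h] at hmem
  simpa [atom] using hmem

theorem unionAtoms_cosetOf_mul_eq_atom_iff (a b : G ⧸ N) :
    unionAtoms N M φ (cosetOf N a * cosetOf N b) = atom N M φ a ↔ b = 1 := by
  rw [cosetOf_mul, unionAtoms_cosetOf, (atom_injective N M φ).eq_iff, mul_eq_left]

end

/-- **Identity Law Theorem.** The coset-shifted relative product with the
identity relation is the identity operation exactly when `C = N`. -/
theorem identity_law_theorem {G G' : Type*} [Group G] [Group G']
    (N : Subgroup G) (M : Subgroup G') [N.Normal] [M.Normal]
    (φ : G ⧸ N ≃* G' ⧸ M) (C : Set G) (hC : IsLeftCosetSet (N : Set G) C) :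
    List.TFAE
      [ (∃ a : G ⧸ N, unionAtoms N M φ (cosetOf N a * C) = atom N M φ a),
        (∀ a : G ⧸ N, unionAtoms N M φ (cosetOf N a * C) = atom N M φ a),
        C = (N : Set G) ] := by
  obtain ⟨g, rfl⟩ := hC
  rw [← cosetOf_mk, ← cosetOf_one, (cosetOf_injective N).eq_iff]
  simp only [unionAtoms_cosetOf_mul_eq_atom_iff, exists_const, forall_const,
    List.tfae_cons_self]
  exact List.tfae_singleton _

end CosetRA
end

section
/- Assume the pre-semi-frame conditions (SF3): φ₁[N₁·N₃] = M₁·N₂, φ₂[M₁·N₂] = M₃·M₂, and φ₃[N₁·N₃] = M₃·M₂. Let C ⊆ G₁ be a left coset of N₁·N₃. The following are equivalent: (i) for every Q ⊆ G₁ that is a union of left cosets of N₁·N₃, φ₂[φ₁[Q]] = φ₃[C⁻¹·Q·C]; (ii) for every Q ⊆ G₂ that is a union of left cosets of M₁·N₂, φ₃⁻¹[φ₂[Q]] = C⁻¹·φ₁⁻¹[Q]·C; (iii) for every Q ⊆ G₃ that is a union of left cosets of M₃·M₂, C·φ₃⁻¹[Q] = φ₁⁻¹[φ₂⁻¹[Q]]·C.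 -/
/-!
Write `P₁ = N₁N₃`, `P₂ = M₁N₂`, `P₃ = M₃M₂`; these are normal subgroups. By (SF3), `φ₁[·]` and
`φ₁⁻¹[·]` restrict to mutually inverse bijections between the unions of left cosets of `P₁` and
of `P₂`, and likewise `φ₂` between `P₂` and `P₃`, and `φ₃` between `P₁` and `P₃`. Since `C` is a
left coset of the normal subgroup `P₁`, we have `C·C⁻¹ = P₁` and `P₁·X = X·P₁ = X` for every union
of left cosets `X` of `P₁`; so `C·(C⁻¹·X·C) = X·C`, and right multiplication by `C` is injective on
such `X`. Then (i) ⇒ (ii) ⇒ (iii) ⇒ (i) by substituting `φ₁⁻¹[Q]`, `φ₂⁻¹[Q]`, resp.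
`φ₃[C⁻¹·Q·C]` for `Q` in the premise and cancelling these bijections.
-/

open scoped Pointwise

namespace CosetRA

variable {G G' : Type*}

section IsUnionOfCosets

variable {G : Type*} [Group G]

theorem isUnionOfCosets_iff {P Q : Set G} :
    IsUnionOfCosets P Q ↔ ∀ q ∈ Q, ∀ p ∈ P, q * p ∈ Q := by
  simp only [IsUnionOfCosets, Set.smul_set_subset_iff, smul_eq_mul]

theorem IsUnionOfCosets.mul_mem {P Q : Set G} (hQ : IsUnionOfCosets P Q) {q p : G}
    (hq : q ∈ Q) (hp : p ∈ P) : q * p ∈ Q :=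
  isUnionOfCosets_iff.1 hQ q hq p hp

theorem IsUnionOfCosets.mono_s7 {P P' Q : Set G} (hP : P' ⊆ P) (hQ : IsUnionOfCosets P Q) :
    IsUnionOfCosets P' Q :=
  isUnionOfCosets_iff.2 fun _ hq _ hp => hQ.mul_mem hq (hP hp)

theorem IsUnionOfCosets.mul_left (A : Set G) {P B : Set G} (hB : IsUnionOfCosets P B) :
    IsUnionOfCosets P (A * B) := by
  refine isUnionOfCosets_iff.2 ?_
  rintro _ ⟨a, ha, b, hb, rfl⟩ p hp
  exact ⟨a, ha, b * p, hB.mul_mem hb hp, (mul_assoc a b p).symm⟩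

variable (H : Subgroup G)

theorem isUnionOfCosets_smul_subgroup (g : G) : IsUnionOfCosets H (g • (H : Set G)) := by
  refine isUnionOfCosets_iff.2 ?_
  rintro _ ⟨h, hh, rfl⟩ p hp
  exact ⟨h * p, H.mul_mem hh hp, (mul_assoc g h p).symm⟩

variable {H}

theorem IsUnionOfCosets.mul_subgroup_eq {Q : Set G} (hQ : IsUnionOfCosets H Q) :
    Q * H = Q := by
  refine (Set.mul_subset_iff.2 fun _ hq _ hp => hQ.mul_mem hq hp).antisymm ?_
  exact Set.subset_mul_left Q H.one_mem

theorem IsUnionOfCosets.subgroup_mul_eq [H.Normal] {Q : Set G} (hQ : IsUnionOfCosets H Q) :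
    H * Q = Q := by
  rw [← Subgroup.set_mul_normal_comm, hQ.mul_subgroup_eq]

theorem smul_subgroup_mul_inv [H.Normal] (g : G) :
    g • (H : Set G) * (g • (H : Set G))⁻¹ = H := by
  ext x
  simp only [Set.mem_mul, Set.mem_inv, Set.mem_smul_set, smul_eq_mul, SetLike.mem_coe]
  constructor
  · rintro ⟨_, ⟨p, hp, rfl⟩, b, ⟨q, hq, hb⟩, rfl⟩
    rw [← inv_inv b, ← hb, show g * p * (g * q)⁻¹ = g * (p * q⁻¹) * g⁻¹ by group]
    exact ‹H.Normal›.conj_mem _ (H.mul_mem hp (H.inv_mem hq)) g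
  · intro hx
    refine ⟨g * (g⁻¹ * x * g), ⟨_, ?_, rfl⟩, g⁻¹, ⟨1, H.one_mem, by simp⟩, by group⟩
    simpa using ‹H.Normal›.conj_mem x hx g⁻¹

theorem IsUnionOfCosets.smul_mul_conj_eq [H.Normal] {X : Set G} (hX : IsUnionOfCosets H X)
    (g : G) : g • (H : Set G) * ((g • (H : Set G))⁻¹ * X * g • (H : Set G)) =
      X * g • (H : Set G) := by
  rw [← mul_assoc, ← mul_assoc, smul_subgroup_mul_inv, hX.subgroup_mul_eq]

theorem IsUnionOfCosets.eq_of_mul_smul_eq [H.Normal] {Q Y : Set G} (hQ : IsUnionOfCosets H Q)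
    (hY : IsUnionOfCosets H Y) {g : G} (h : Q * g • (H : Set G) = Y * g • (H : Set G)) :
    Q = Y := by
  rw [← hQ.mul_subgroup_eq, ← hY.mul_subgroup_eq, ← smul_subgroup_mul_inv g, ← mul_assoc,
    ← mul_assoc, h]

end IsUnionOfCosets

section QuotientImage

variable {G G' : Type*} [Group G] [Group G'] {N : Subgroup G} {M : Subgroup G'}
  [N.Normal] [M.Normal] (φ : G ⧸ N ≃* G' ⧸ M)

theorem bwd_eq_fwd_symm (S : Set G') : bwd N M φ S = fwd M N φ.symm S := by
  ext g
  simp only [bwd, fwd, Set.mem_ofPred_eq, MulEquiv.eq_symm_apply, eq_comm]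

theorem fwd_bwd_of_isUnionOfCosets {S : Set G'} (hS : IsUnionOfCosets M S) :
    fwd N M φ (bwd N M φ S) = S := by
  ext x
  constructor
  · rintro ⟨g, ⟨h, hh, e⟩, e'⟩
    have hm : h⁻¹ * x ∈ M := QuotientGroup.eq.1 (e.symm.trans e')
    simpa using hS.mul_mem hh hm
  · intro hx
    obtain ⟨g, hg⟩ := QuotientGroup.mk_surjective (φ.symm x)
    have hgx : φ g = x := by rw [hg, φ.apply_symm_apply]
    exact ⟨g, ⟨x, hx, hgx⟩, hgx⟩

theorem bwd_fwd_of_isUnionOfCosets {S : Set G} (hS : IsUnionOfCosets N S) :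
    bwd N M φ (fwd N M φ S) = S := by
  simpa only [bwd_eq_fwd_symm, MulEquiv.symm_symm] using fwd_bwd_of_isUnionOfCosets φ.symm hS

variable {φ}

theorem IsUnionOfCosets.fwd {P : Set G} {P' : Set G'} (hP : P' ⊆ fwd N M φ P) {Q : Set G}
    (hQ : IsUnionOfCosets P Q) : IsUnionOfCosets P' (fwd N M φ Q) := by
  refine isUnionOfCosets_iff.2 ?_
  rintro h ⟨g, hg, e⟩ p' hp'
  obtain ⟨p, hp, ep⟩ := hP hp'
  exact ⟨g * p, hQ.mul_mem hg hp, by rw [QuotientGroup.mk_mul, map_mul, e, ep]; rfl⟩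

theorem IsUnionOfCosets.bwd {P : Set G} {P' : Set G'} (hP : CosetRA.fwd N M φ P ⊆ P')
    {Q : Set G'} (hQ : IsUnionOfCosets P' Q) : IsUnionOfCosets P (bwd N M φ Q) := by
  rw [bwd_eq_fwd_symm]
  refine hQ.fwd fun p hp => ?_
  obtain ⟨h, hh⟩ := QuotientGroup.mk_surjective (φ p)
  exact ⟨h, hP ⟨p, hp, hh.symm⟩, by rw [hh, φ.symm_apply_apply]⟩

end QuotientImage

/-- The three formulations of semi-frame condition (iv) are equivalent. -/
theorem sfimage_lemma {G₁ G₂ G₃ : Type*} [Group G₁] [Group G₂] [Group G₃]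
    (N₁ : Subgroup G₁) (M₁ : Subgroup G₂) (N₂ : Subgroup G₂) (M₂ : Subgroup G₃)
    (N₃ : Subgroup G₁) (M₃ : Subgroup G₃)
    [N₁.Normal] [M₁.Normal] [N₂.Normal] [M₂.Normal] [N₃.Normal] [M₃.Normal]
    (φ₁ : G₁ ⧸ N₁ ≃* G₂ ⧸ M₁) (φ₂ : G₂ ⧸ N₂ ≃* G₃ ⧸ M₂) (φ₃ : G₁ ⧸ N₃ ≃* G₃ ⧸ M₃)
    (hSF3a : fwd N₁ M₁ φ₁ ((N₁ : Set G₁) * (N₃ : Set G₁)) = (M₁ : Set G₂) * (N₂ : Set G₂))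
    (hSF3b : fwd N₂ M₂ φ₂ ((M₁ : Set G₂) * (N₂ : Set G₂)) = (M₃ : Set G₃) * (M₂ : Set G₃))
    (hSF3c : fwd N₃ M₃ φ₃ ((N₁ : Set G₁) * (N₃ : Set G₁)) = (M₃ : Set G₃) * (M₂ : Set G₃))
    (C : Set G₁) (hC : IsLeftCosetSet ((N₁ : Set G₁) * (N₃ : Set G₁)) C) :
    List.TFAE
      [ (∀ Q : Set G₁, IsUnionOfCosets ((N₁ : Set G₁) * (N₃ : Set G₁)) Q →
          fwd N₂ M₂ φ₂ (fwd N₁ M₁ φ₁ Q) = fwd N₃ M₃ φ₃ (C⁻¹ * Q * C)),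
        (∀ Q : Set G₂, IsUnionOfCosets ((M₁ : Set G₂) * (N₂ : Set G₂)) Q →
          bwd N₃ M₃ φ₃ (fwd N₂ M₂ φ₂ Q) = C⁻¹ * bwd N₁ M₁ φ₁ Q * C),
        (∀ Q : Set G₃, IsUnionOfCosets ((M₃ : Set G₃) * (M₂ : Set G₃)) Q →
          C * bwd N₃ M₃ φ₃ Q = bwd N₁ M₁ φ₁ (bwd N₂ M₂ φ₂ Q) * C) ] := by
  rw [← Subgroup.mul_normal N₁ N₃, ← Subgroup.mul_normal M₁ N₂,
    ← Subgroup.mul_normal M₃ M₂] at *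
  obtain ⟨g, rfl⟩ := hC
  have hCoset := isUnionOfCosets_smul_subgroup (N₁ ⊔ N₃) g
  tfae_have 1 → 2 := by
    intro h1 Q hQ
    have h := h1 _ (hQ.bwd hSF3a.le)
    rw [fwd_bwd_of_isUnionOfCosets φ₁ (hQ.mono_s7 (SetLike.coe_subset_coe.2 le_sup_left))] at h
    rw [h, bwd_fwd_of_isUnionOfCosets φ₃ ((hCoset.mul_left _).mono_s7
      (SetLike.coe_subset_coe.2 le_sup_right))]
  tfae_have 2 → 3 := by
    intro h2 Q hQ
    have h := h2 _ (hQ.bwd hSF3b.le)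
    rw [fwd_bwd_of_isUnionOfCosets φ₂ (hQ.mono_s7 (SetLike.coe_subset_coe.2 le_sup_right))] at h
    rw [h, ((hQ.bwd hSF3b.le).bwd hSF3a.le).smul_mul_conj_eq]
  tfae_have 3 → 1 := by
    intro h3 Q hQ
    have hConj := hCoset.mul_left ((g • ((N₁ ⊔ N₃ : Subgroup G₁) : Set G₁))⁻¹ * Q)
    have hImage := hConj.fwd hSF3c.ge
    have h := h3 _ hImage
    rw [bwd_fwd_of_isUnionOfCosets φ₃ (hConj.mono_s7 (SetLike.coe_subset_coe.2 le_sup_right)),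
      hQ.smul_mul_conj_eq] at h
    have hPreimage := hImage.bwd hSF3b.le
    conv_lhs => rw [hQ.eq_of_mul_smul_eq (hPreimage.bwd hSF3a.le) h]
    rw [fwd_bwd_of_isUnionOfCosets φ₁ (hPreimage.mono_s7 (SetLike.coe_subset_coe.2 le_sup_left)),
      fwd_bwd_of_isUnionOfCosets φ₂ (hImage.mono_s7 (SetLike.coe_subset_coe.2 le_sup_right))]
  tfae_finish

end CosetRA
end

section
/- Assume the pre-semi-frame conditions (SF3): φ₁[N₁·N₃] = M₁·N₂, φ₂[M₁·N₂] = M₃·M₂, and φ₃[N₁·N₃] = M₃·M₂, and let C ⊆ G₁ be a left coset of N₁·N₃ satisfying the semi-frame condition (SF4): for every Q ⊆ G₁ that is a union of left cosets of N₁·N₃, φ₂[φ₁[Q]] = φ₃[C⁻¹·Q·C]. Then the following are equivalent: (i) R¹_a ⊗_C R²_b = R¹_a ∘ R²_b for some a ∈ G₁⧸N₁ and b ∈ G₂⧸N₂; (ii) R¹_a ⊗_C R²_b = R¹_a ∘ R²_b for all a ∈ G₁⧸N₁ and b ∈ G₂⧸N₂; (iii) C = N₁·N₃ as subsets of G₁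 (i.e. C is the identity coset). -/
/-! With `P = N₁N₃` and `C = g₀P`, both relations are unions over `g ∈ G₁` of `{g} × φ₃[xP]`
for a single `P`-coset `xP`. For the relative product `x = g s g₀`, where
`sP = φ₁⁻¹[⟨φ₁ a⟩⟨b⟩]`; for the composition, (SF4) applied to the coset `g s P` gives
`x = g₀⁻¹ g s g₀`. Since `φ₃[·]` is injective on `P`-cosets, the two relations agree iff
`g s g₀ P = g₀⁻¹ g s g₀ P` for all `g`, i.e. iff `g₀ ∈ P`, independently of `a` and `b`. -/

open scoped Pointwise

namespace CosetRA

variable {G G' : Type*}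

section Cosets

variable [Group G]

lemma cosetOf_eq_smul {N : Subgroup G} {x : G} {a : G ⧸ N} (h : (x : G ⧸ N) = a) :
    cosetOf N a = x • (N : Set G) := by
  ext g
  rw [mem_leftCoset_iff, SetLike.mem_coe, ← QuotientGroup.eq, h]
  exact eq_comm

lemma smul_coe_mul_smul_coe (H : Subgroup G) [hH : H.Normal] (K : Set G) (x y : G) :
    x • (H : Set G) * y • K = (x * y) • ((H : Set G) * K) := by
  rw [smul_mul_assoc, ← Set.op_smul_set_mul_eq_mul_smul_set, ← eq_cosets_of_normal _ hH,
    smul_mul_assoc, smul_smul]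

lemma smul_coe_mul_smul_coe_self (P : Subgroup G) [P.Normal] (x y : G) :
    x • (P : Set G) * y • (P : Set G) = (x * y) • (P : Set G) := by
  rw [smul_coe_mul_smul_coe]
  exact congrArg _ P.toSubmonoid.coe_mul_self_eq

lemma inv_smul_coe (P : Subgroup G) [hP : P.Normal] (x : G) :
    (x • (P : Set G))⁻¹ = x⁻¹ • (P : Set G) := by
  rw [Set.inv_smul_set_distrib, inv_coe_set, ← eq_cosets_of_normal _ hP]

lemma smul_coe_eq_of_mem {P : Subgroup G} {g x : G} (hg : g ∈ x • (P : Set G)) :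
    g • (P : Set G) = x • (P : Set G) := by
  rw [mem_leftCoset_iff] at hg
  exact (leftCoset_eq_iff P).mpr (by simpa using P.inv_mem hg)

lemma smul_coe_eq_smul_coe_iff (P : Subgroup G) {x y : G} :
    x • (P : Set G) = y • (P : Set G) ↔ (x : G ⧸ P) = y :=
  (leftCoset_eq_iff P).trans QuotientGroup.eq.symm

lemma smul_coe_eq_self_iff (P : Subgroup G) {g : G} : g • (P : Set G) = P ↔ g ∈ P :=
  ⟨mem_leftCoset_leftCoset P.toSubmonoid, leftCoset_mem_leftCoset P⟩

lemma isUnionOfCosets_smul_coe (P : Subgroup G) (x : G) :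
    IsUnionOfCosets (P : Set G) (x • (P : Set G)) :=
  fun _ hg => (smul_coe_eq_of_mem hg).subset

lemma mk_mul_eq_mk_conj_iff (P : Subgroup G) [P.Normal] (x g : G) :
    ((x * g : G) : G ⧸ P) = ((g⁻¹ * x * g : G) : G ⧸ P) ↔ g ∈ P := by
  simp only [QuotientGroup.mk_mul, QuotientGroup.mk_inv, mul_left_inj, ← QuotientGroup.eq_one_iff]
  rw [eq_comm, mul_eq_right, inv_eq_one]

end Cosets

section Transport

variable [Group G] [Group G'] {N : Subgroup G} {M : Subgroup G'} [N.Normal] [M.Normal]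
  (φ : G ⧸ N ≃* G' ⧸ M)

lemma fwd_smul {x : G} {y : G'} (hxy : φ x = y) (S : Set G) :
    fwd N M φ (x • S) = y • fwd N M φ S := by
  ext h
  simp only [fwd, mem_leftCoset_iff, Set.mem_ofPred_eq]
  constructor
  · rintro ⟨g, hg, e⟩
    exact ⟨x⁻¹ * g, hg, by simp [map_mul, hxy, e]⟩
  · rintro ⟨g, hg, e⟩
    exact ⟨x * g, by simpa using hg, by simp [map_mul, hxy, e]⟩

lemma bwd_fwd_smul_coe {P : Subgroup G} (hNP : N ≤ P) (x : G) :
    bwd N M φ (fwd N M φ (x • (P : Set G))) = x • (P : Set G) := by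
  ext g
  simp only [bwd, fwd, Set.mem_ofPred_eq]
  constructor
  · rintro ⟨h, ⟨g', hg', e'⟩, e⟩
    have hg'g : g'⁻¹ * g ∈ N := QuotientGroup.eq.mp (φ.injective (e'.trans e.symm))
    rw [← smul_coe_eq_of_mem hg']
    exact (mem_leftCoset_iff g').mpr (hNP hg'g)
  · intro hg
    obtain ⟨h, hh⟩ := QuotientGroup.mk_surjective (φ g)
    exact ⟨h, ⟨g, hg, hh.symm⟩, hh.symm⟩

lemma fwd_smul_coe_inj {P : Subgroup G} (hNP : N ≤ P) {x y : G} :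
    fwd N M φ (x • (P : Set G)) = fwd N M φ (y • (P : Set G)) ↔ (x : G ⧸ P) = y := by
  rw [← smul_coe_eq_smul_coe_iff]
  refine ⟨fun h => ?_, congrArg _⟩
  rw [← bwd_fwd_smul_coe φ hNP x, h, bwd_fwd_smul_coe φ hNP y]

lemma mem_unionAtoms_smul_coe {P : Subgroup G} (hNP : N ≤ P) (z g : G) (k : G') :
    (g, k) ∈ unionAtoms N M φ (z • (P : Set G)) ↔ k ∈ fwd N M φ ((g * z) • (P : Set G)) := by
  simp only [unionAtoms, atom, fwd, Set.mem_iUnion, Set.mem_ofPred_eq, exists_prop]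
  constructor
  · rintro ⟨c, hc, hk⟩
    obtain ⟨c₀, rfl⟩ := QuotientGroup.mk_surjective c
    refine ⟨g * c₀, ?_, by rw [QuotientGroup.mk_mul, map_mul, hk]⟩
    rw [← smul_smul]
    exact Set.smul_mem_smul_set (hc rfl)
  · rintro ⟨w, hw, hk⟩
    have hw' : g⁻¹ * w ∈ z • (P : Set G) := by
      rwa [mul_smul, Set.mem_smul_set_iff_inv_smul_mem] at hw
    refine ⟨((g⁻¹ * w : G) : G ⧸ N), ?_, ?_⟩
    · rw [cosetOf_eq_smul rfl, ← smul_coe_eq_of_mem hw']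
      exact Set.smul_set_mono hNP
    · rw [← map_mul, ← QuotientGroup.mk_mul, mul_inv_cancel_left, hk]

lemma cosetOf_mul_cosetOf_eq_fwd {K : Subgroup G'} {P : Subgroup G}
    (hP : fwd N M φ (P : Set G) = (M : Set G') * (K : Set G'))
    {t : G} {β : G'} (ht : φ t = β) (u : G) :
    cosetOf M (φ u) * cosetOf K (β : G' ⧸ K) = fwd N M φ ((u * t) • (P : Set G)) := by
  obtain ⟨α, hα⟩ := QuotientGroup.mk_surjective (φ u)
  have hut : φ (u * t : G) = (α * β : G') := by
    rw [QuotientGroup.mk_mul, map_mul, ← hα, ht, ← QuotientGroup.mk_mul]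
  rw [cosetOf_eq_smul hα, cosetOf_eq_smul rfl, smul_coe_mul_smul_coe, fwd_smul φ hut, hP]

end Transport

section Composition

variable {G₁ G₂ G₃ : Type*} [Group G₁] [Group G₂] [Group G₃]
  {N₁ N₃ : Subgroup G₁} {M₁ N₂ : Subgroup G₂} {M₂ M₃ : Subgroup G₃}
  [N₁.Normal] [M₁.Normal] [N₂.Normal] [M₂.Normal] [N₃.Normal] [M₃.Normal]
  (φ₁ : G₁ ⧸ N₁ ≃* G₂ ⧸ M₁) (φ₂ : G₂ ⧸ N₂ ≃* G₃ ⧸ M₂) (φ₃ : G₁ ⧸ N₃ ≃* G₃ ⧸ M₃)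

lemma mem_rcomp_atom_atom (a : G₁ ⧸ N₁) (b : G₂ ⧸ N₂) (g : G₁) (k : G₃) :
    (g, k) ∈ rcomp (atom N₁ M₁ φ₁ a) (atom N₂ M₂ φ₂ b) ↔
      k ∈ fwd N₂ M₂ φ₂ (cosetOf M₁ (φ₁ g * φ₁ a) * cosetOf N₂ b) := by
  simp only [rcomp, atom, fwd, Set.mem_ofPred_eq]
  constructor
  · rintro ⟨h, hh, hk⟩
    obtain ⟨b₀, rfl⟩ := QuotientGroup.mk_surjective b
    exact ⟨h * b₀, Set.mul_mem_mul hh rfl, by rw [QuotientGroup.mk_mul, map_mul, hk]⟩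
  · rintro ⟨_, ⟨h, hh, b₀, hb₀, rfl⟩, hk⟩
    exact ⟨h, hh, by rw [← hk, QuotientGroup.mk_mul, map_mul, hb₀]⟩

theorem unionAtoms_eq_rcomp_iff_mem {P : Subgroup G₁} [P.Normal] (hN₁ : N₁ ≤ P) (hN₃ : N₃ ≤ P)
    (h₁ : fwd N₁ M₁ φ₁ (P : Set G₁) = (M₁ : Set G₂) * (N₂ : Set G₂)) {g₀ : G₁}
    (hSF4 : ∀ x : G₁, fwd N₂ M₂ φ₂ (fwd N₁ M₁ φ₁ (x • (P : Set G₁))) =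
      fwd N₃ M₃ φ₃ ((g₀⁻¹ * x * g₀) • (P : Set G₁)))
    (a : G₁ ⧸ N₁) (b : G₂ ⧸ N₂) :
    unionAtoms N₃ M₃ φ₃ (bwd N₁ M₁ φ₁ (cosetOf M₁ (φ₁ a) * cosetOf N₂ b) * g₀ • (P : Set G₁)) =
      rcomp (atom N₁ M₁ φ₁ a) (atom N₂ M₂ φ₂ b) ↔ g₀ ∈ P := by
  obtain ⟨a₀, rfl⟩ := QuotientGroup.mk_surjective a
  obtain ⟨β, rfl⟩ := QuotientGroup.mk_surjective b
  -- `(a₀ * t) • P` will be `φ₁⁻¹[⟨φ₁ a⟩⟨b⟩]`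
  obtain ⟨t, ht⟩ : ∃ t : G₁, φ₁ t = β :=
    (QuotientGroup.mk_surjective (φ₁.symm β)).imp fun t h => by rw [h, φ₁.apply_symm_apply]
  have hL : ∀ g k, (g, k) ∈ unionAtoms N₃ M₃ φ₃
      (bwd N₁ M₁ φ₁ (cosetOf M₁ (φ₁ a₀) * cosetOf N₂ β) * g₀ • (P : Set G₁)) ↔
      k ∈ fwd N₃ M₃ φ₃ ((g * (a₀ * t) * g₀) • (P : Set G₁)) := by
    intro g k
    rw [cosetOf_mul_cosetOf_eq_fwd φ₁ h₁ ht, bwd_fwd_smul_coe φ₁ hN₁,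
      smul_coe_mul_smul_coe_self, mem_unionAtoms_smul_coe φ₃ hN₃]
    simp only [mul_assoc]
  have hR : ∀ g k, (g, k) ∈ rcomp (atom N₁ M₁ φ₁ a₀) (atom N₂ M₂ φ₂ β) ↔
      k ∈ fwd N₃ M₃ φ₃ ((g₀⁻¹ * (g * (a₀ * t)) * g₀) • (P : Set G₁)) := by
    intro g k
    rw [mem_rcomp_atom_atom, ← map_mul, ← QuotientGroup.mk_mul, cosetOf_mul_cosetOf_eq_fwd φ₁ h₁ ht,
      hSF4, mul_assoc g]
  calc _ ↔ ∀ g : G₁, fwd N₃ M₃ φ₃ ((g * (a₀ * t) * g₀) • (P : Set G₁)) =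
        fwd N₃ M₃ φ₃ ((g₀⁻¹ * (g * (a₀ * t)) * g₀) • (P : Set G₁)) := by
        simp only [Set.ext_iff, Prod.forall, hL, hR]
    _ ↔ ∀ _ : G₁, g₀ ∈ P := by simp only [fwd_smul_coe_inj φ₃ hN₃, mk_mul_eq_mk_conj_iff]
    _ ↔ g₀ ∈ P := forall_const G₁

end Composition

theorem otimes_eq_comp_iff_general {G₁ G₂ G₃ : Type*} [Group G₁] [Group G₂] [Group G₃]
    (N₁ : Subgroup G₁) (M₁ : Subgroup G₂) (N₂ : Subgroup G₂) (M₂ : Subgroup G₃)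
    (N₃ : Subgroup G₁) (M₃ : Subgroup G₃)
    [N₁.Normal] [M₁.Normal] [N₂.Normal] [M₂.Normal] [N₃.Normal] [M₃.Normal]
    (φ₁ : G₁ ⧸ N₁ ≃* G₂ ⧸ M₁) (φ₂ : G₂ ⧸ N₂ ≃* G₃ ⧸ M₂) (φ₃ : G₁ ⧸ N₃ ≃* G₃ ⧸ M₃)
    (hSF3a : fwd N₁ M₁ φ₁ ((N₁ : Set G₁) * (N₃ : Set G₁)) = (M₁ : Set G₂) * (N₂ : Set G₂))
    (C : Set G₁) (hC : IsLeftCosetSet ((N₁ : Set G₁) * (N₃ : Set G₁)) C)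
    (hSF4 : ∀ Q : Set G₁, IsUnionOfCosets ((N₁ : Set G₁) * (N₃ : Set G₁)) Q →
      fwd N₂ M₂ φ₂ (fwd N₁ M₁ φ₁ Q) = fwd N₃ M₃ φ₃ (C⁻¹ * Q * C)) :
    List.TFAE
      [ (∃ (a : G₁ ⧸ N₁) (b : G₂ ⧸ N₂),
          unionAtoms N₃ M₃ φ₃ (bwd N₁ M₁ φ₁ (cosetOf M₁ (φ₁ a) * cosetOf N₂ b) * C) =
            rcomp (atom N₁ M₁ φ₁ a) (atom N₂ M₂ φ₂ b)),
        (∀ (a : G₁ ⧸ N₁) (b : G₂ ⧸ N₂),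
          unionAtoms N₃ M₃ φ₃ (bwd N₁ M₁ φ₁ (cosetOf M₁ (φ₁ a) * cosetOf N₂ b) * C) =
            rcomp (atom N₁ M₁ φ₁ a) (atom N₂ M₂ φ₂ b)),
        C = (N₁ : Set G₁) * (N₃ : Set G₁) ] := by
  rw [← Subgroup.normal_mul N₁ N₃] at hSF3a hC hSF4 ⊢
  obtain ⟨g₀, rfl⟩ := hC
  have key := unionAtoms_eq_rcomp_iff_mem φ₁ φ₂ φ₃ le_sup_left le_sup_right hSF3a fun x => by
    rw [hSF4 _ (isUnionOfCosets_smul_coe _ x), inv_smul_coe, smul_coe_mul_smul_coe_self,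
      smul_coe_mul_smul_coe_self]
  rw [smul_coe_eq_self_iff]
  tfae_have 1 → 3 := fun ⟨a, b, h⟩ => (key a b).mp h
  tfae_have 3 → 2 := fun h a b => (key a b).mpr h
  tfae_have 2 → 1 := fun h => ⟨1, 1, h 1 1⟩
  tfae_finish

/-- The coset-shifted relative product agrees with relational composition
exactly when the shifting coset is the identity coset. -/
theorem otimes_eq_comp_iff {G₁ G₂ G₃ : Type*} [Group G₁] [Group G₂] [Group G₃]
    (N₁ : Subgroup G₁) (M₁ : Subgroup G₂) (N₂ : Subgroup G₂) (M₂ : Subgroup G₃)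
    (N₃ : Subgroup G₁) (M₃ : Subgroup G₃)
    [N₁.Normal] [M₁.Normal] [N₂.Normal] [M₂.Normal] [N₃.Normal] [M₃.Normal]
    (φ₁ : G₁ ⧸ N₁ ≃* G₂ ⧸ M₁) (φ₂ : G₂ ⧸ N₂ ≃* G₃ ⧸ M₂) (φ₃ : G₁ ⧸ N₃ ≃* G₃ ⧸ M₃)
    (hSF3a : fwd N₁ M₁ φ₁ ((N₁ : Set G₁) * (N₃ : Set G₁)) = (M₁ : Set G₂) * (N₂ : Set G₂))
    (hSF3b : fwd N₂ M₂ φ₂ ((M₁ : Set G₂) * (N₂ : Set G₂)) = (M₃ : Set G₃) * (M₂ : Set G₃))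
    (hSF3c : fwd N₃ M₃ φ₃ ((N₁ : Set G₁) * (N₃ : Set G₁)) = (M₃ : Set G₃) * (M₂ : Set G₃))
    (C : Set G₁) (hC : IsLeftCosetSet ((N₁ : Set G₁) * (N₃ : Set G₁)) C)
    (hSF4 : ∀ Q : Set G₁, IsUnionOfCosets ((N₁ : Set G₁) * (N₃ : Set G₁)) Q →
      fwd N₂ M₂ φ₂ (fwd N₁ M₁ φ₁ Q) = fwd N₃ M₃ φ₃ (C⁻¹ * Q * C)) :
    List.TFAE
      [ (∃ (a : G₁ ⧸ N₁) (b : G₂ ⧸ N₂),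
          unionAtoms N₃ M₃ φ₃ (bwd N₁ M₁ φ₁ (cosetOf M₁ (φ₁ a) * cosetOf N₂ b) * C) =
            rcomp (atom N₁ M₁ φ₁ a) (atom N₂ M₂ φ₂ b)),
        (∀ (a : G₁ ⧸ N₁) (b : G₂ ⧸ N₂),
          unionAtoms N₃ M₃ φ₃ (bwd N₁ M₁ φ₁ (cosetOf M₁ (φ₁ a) * cosetOf N₂ b) * C) =
            rcomp (atom N₁ M₁ φ₁ a) (atom N₂ M₂ φ₂ b)),
        C = (N₁ : Set G₁) * (N₃ : Set G₁) ] :=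
  otimes_eq_comp_iff_general N₁ M₁ N₂ M₂ N₃ M₃ φ₁ φ₂ φ₃ hSF3a C hC hSF4

end CosetRA
end

section
/- Assume the pre-semi-frame conditions (SF3): φ₁[N₁·N₃] = M₁·N₂, φ₂[M₁·N₂] = M₃·M₂, and φ₃[N₁·N₃] = M₃·M₂, and let C ⊆ G₁ be a left coset of N₁·N₃. Then the union of the coset-shifted relative products over all atoms equals the universal relation: ⋃{R¹_a ⊗_C R²_b : a ∈ G₁⧸N₁, b ∈ G₂⧸N₂} = G₁ × G₃. -/
open scoped Pointwise

namespace CosetRA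

variable {G G' : Type*}

/- Every pair `(g, k)` lies in exactly one atom `R_c` of the third isomorphism, and `C ⊇ g₀ N₃`
gives `⟨c⟩ = x N₃ ⊆ ⟨[x g₀⁻¹]_{N₁}⟩ · C` for any representative `x` of `c`. Since `⟨a⟩` is
contained in `φ₁⁻¹[⟨φ₁ a⟩ · ⟨1⟩]`, the pair `(a, 1)` with `a = [x g₀⁻¹]_{N₁}` produces `R_c`. -/

section

variable [Group G] [Group G']

theorem mem_atom_inv_mul (N : Subgroup G) (M : Subgroup G') [N.Normal] [M.Normal]
    (φ : G ⧸ N ≃* G' ⧸ M) (g : G) (k : G') :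
    (g, k) ∈ atom N M φ ((g : G ⧸ N)⁻¹ * φ.symm (k : G' ⧸ M)) := by
  simp [atom]

theorem atom_subset_unionAtoms (N : Subgroup G) (M : Subgroup G') [N.Normal] [M.Normal]
    (φ : G ⧸ N ≃* G' ⧸ M) {K : Set G} {c : G ⧸ N} (hc : cosetOf N c ⊆ K) :
    atom N M φ c ⊆ unionAtoms N M φ K :=
  Set.subset_biUnion_of_mem (u := fun c => atom N M φ c) hc

theorem cosetOf_subset_bwd_mul (N : Subgroup G) (M : Subgroup G') [N.Normal] [M.Normal]
    (φ : G ⧸ N ≃* G' ⧸ M) (a : G ⧸ N) {T : Set G'} (hT : (1 : G') ∈ T) :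
    cosetOf N a ⊆ bwd N M φ (cosetOf M (φ a) * T) := by
  intro g hg
  obtain ⟨h, hh⟩ := QuotientGroup.mk_surjective (φ a)
  refine ⟨h * 1, Set.mul_mem_mul hh hT, ?_⟩
  rw [mul_one, hh, ← hg]

end

theorem exists_cosetOf_subset_mul_of_isLeftCosetSet [Group G] (N₁ N₃ : Subgroup G)
    {P C : Set G} (hP : (N₃ : Set G) ⊆ P) (hC : IsLeftCosetSet P C) (c : G ⧸ N₃) :
    ∃ a : G ⧸ N₁, cosetOf N₃ c ⊆ cosetOf N₁ a * C := by
  obtain ⟨g₀, rfl⟩ := hC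
  obtain ⟨x, rfl⟩ := QuotientGroup.mk_surjective c
  refine ⟨(x * g₀⁻¹ : G), fun y hy => ⟨x * g₀⁻¹, rfl, g₀ * (x⁻¹ * y), ?_, by group⟩⟩
  exact Set.smul_mem_smul_set (hP (QuotientGroup.eq.mp hy.symm))

theorem union_otimes_eq_univ_general {G₁ G₂ G₃ : Type*} [Group G₁] [Group G₂] [Group G₃]
    (N₁ : Subgroup G₁) (M₁ : Subgroup G₂) (N₂ : Subgroup G₂)
    (N₃ : Subgroup G₁) (M₃ : Subgroup G₃)
    [N₁.Normal] [M₁.Normal] [N₃.Normal] [M₃.Normal]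
    (φ₁ : G₁ ⧸ N₁ ≃* G₂ ⧸ M₁) (φ₃ : G₁ ⧸ N₃ ≃* G₃ ⧸ M₃)
    (C : Set G₁) (hC : IsLeftCosetSet ((N₁ : Set G₁) * (N₃ : Set G₁)) C) :
    (⋃ (a : G₁ ⧸ N₁) (b : G₂ ⧸ N₂),
        unionAtoms N₃ M₃ φ₃ (bwd N₁ M₁ φ₁ (cosetOf M₁ (φ₁ a) * cosetOf N₂ b) * C)) =
      (Set.univ : Set (G₁ × G₃)) := by
  refine Set.eq_univ_of_forall fun ⟨g, k⟩ => ?_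
  set c := (g : G₁ ⧸ N₃)⁻¹ * φ₃.symm (k : G₃ ⧸ M₃)
  have hN₃ : (N₃ : Set G₁) ⊆ N₁ * N₃ := Set.subset_mul_right _ N₁.one_mem
  obtain ⟨a, ha⟩ := exists_cosetOf_subset_mul_of_isLeftCosetSet N₁ N₃ hN₃ hC c
  have hcover : cosetOf N₃ c ⊆ bwd N₁ M₁ φ₁ (cosetOf M₁ (φ₁ a) * cosetOf N₂ (1 : G₂)) * C :=
    ha.trans (Set.mul_subset_mul_right (cosetOf_subset_bwd_mul N₁ M₁ φ₁ a rfl))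
  exact Set.mem_iUnion₂.mpr
    ⟨a, (1 : G₂), atom_subset_unionAtoms N₃ M₃ φ₃ hcover (mem_atom_inv_mul N₃ M₃ φ₃ g k)⟩

/-- The union of the coset-shifted relative products over all atoms is the
universal relation `G₁ × G₃`. -/
theorem union_otimes_eq_univ {G₁ G₂ G₃ : Type*} [Group G₁] [Group G₂] [Group G₃]
    (N₁ : Subgroup G₁) (M₁ : Subgroup G₂) (N₂ : Subgroup G₂) (M₂ : Subgroup G₃)
    (N₃ : Subgroup G₁) (M₃ : Subgroup G₃)
    [N₁.Normal] [M₁.Normal] [N₂.Normal] [M₂.Normal] [N₃.Normal] [M₃.Normal]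
    (φ₁ : G₁ ⧸ N₁ ≃* G₂ ⧸ M₁) (φ₂ : G₂ ⧸ N₂ ≃* G₃ ⧸ M₂) (φ₃ : G₁ ⧸ N₃ ≃* G₃ ⧸ M₃)
    (hSF3a : fwd N₁ M₁ φ₁ ((N₁ : Set G₁) * (N₃ : Set G₁)) = (M₁ : Set G₂) * (N₂ : Set G₂))
    (hSF3b : fwd N₂ M₂ φ₂ ((M₁ : Set G₂) * (N₂ : Set G₂)) = (M₃ : Set G₃) * (M₂ : Set G₃))
    (hSF3c : fwd N₃ M₃ φ₃ ((N₁ : Set G₁) * (N₃ : Set G₁)) = (M₃ : Set G₃) * (M₂ : Set G₃))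
    (C : Set G₁) (hC : IsLeftCosetSet ((N₁ : Set G₁) * (N₃ : Set G₁)) C) :
    (⋃ (a : G₁ ⧸ N₁) (b : G₂ ⧸ N₂),
        unionAtoms N₃ M₃ φ₃ (bwd N₁ M₁ φ₁ (cosetOf M₁ (φ₁ a) * cosetOf N₂ b) * C)) =
      (Set.univ : Set (G₁ × G₃)) :=
  union_otimes_eq_univ_general N₁ M₁ N₂ N₃ M₃ φ₁ φ₃ C hC

end CosetRA
end
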